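/- Fix ρ ∈ (−1,1) and let x, y ∈ ℝ satisfy x − ρy > 0 and y − ρx > 0. Then the joint upper-tail probability of the standard bivariate normal satisfies the Savage-type bounds: P(X > x, Y > y) ≤ φ₂(x,y;ρ)·(1−ρ²)²/((x−ρy)(y−ρx)), and P(X > x, Y > y) ≥ φ₂(x,y;ρ)·(1−ρ²)²/((x−ρy)(y−ρx))·[1 − (1−ρ²)·(1/(x−ρy)² − ρ/((x−ρy)(y−ρx)) + 1/(y−ρx)²)]. -/

import Mathlib

open MeasureTheory

/-- Standard bivariate normal density with correlation `ρ`. -/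
noncomputable def biNormalPdf (ρ x y : ℝ) : ℝ :=
  (2 * Real.pi * Real.sqrt (1 - ρ ^ 2))⁻¹ *
    Real.exp (-(x ^ 2 - 2 * ρ * x * y + y ^ 2) / (2 * (1 - ρ ^ 2)))

/-- Joint upper-tail probability of the standard bivariate normal. -/
noncomputable def biNormalTail (ρ x y : ℝ) : ℝ :=
  ∫ u in Set.Ioi x, ∫ v in Set.Ioi y, biNormalPdf ρ u v

/-!
Translating the quadrant to the origin, `φ₂(x+s, y+t) = φ₂(x,y) e^{-(αs+ct)} e^{-βQ(s,t)}` with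
`α = (x-ρy)/(1-ρ²)`, `c = (y-ρx)/(1-ρ²)`, `β = 1/(2(1-ρ²))` and `Q(s,t) = s² - 2ρst + t² ≥ 0`.
Bounding `1 - βQ ≤ e^{-βQ} ≤ 1` reduces both inequalities to the exponential moments
`∫∫ sⁱ tʲ e^{-(αs+ct)} = i! j! / (α^{i+1} c^{j+1})` over the quadrant.
-/

open Set Real
open scoped Nat

lemma integral_Ioi_eq_integral_Ioi_zero_add {E : Type*} [NormedAddCommGroup E] [NormedSpace ℝ E]
    (f : ℝ → E) (c : ℝ) : ∫ v in Ioi c, f v = ∫ t in Ioi 0, f (c + t) := by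
  simpa [image_const_add_Ioi] using
    (measurePreserving_add_left volume c).setIntegral_image_emb
      (measurableEmbedding_addLeft c) f (Ioi 0)

lemma integral_pow_mul_exp_neg_mul_Ioi (n : ℕ) {c : ℝ} (hc : 0 < c) :
    ∫ t in Ioi 0, t ^ n * exp (-(c * t)) = n ! / c ^ (n + 1) := by
  have h := integral_rpow_mul_exp_neg_mul_Ioi (a := n + 1) (by positivity) hc
  simp only [add_sub_cancel_right, rpow_natCast] at h
  rw [h, Gamma_nat_eq_factorial, ← Nat.cast_add_one, rpow_natCast, div_pow, one_pow,
    one_div_mul_eq_div]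

lemma integrableOn_pow_mul_exp_neg_mul_Ioi (n : ℕ) {c : ℝ} (hc : 0 < c) :
    IntegrableOn (fun t => t ^ n * exp (-(c * t))) (Ioi 0) :=
  .of_integral_ne_zero (by rw [integral_pow_mul_exp_neg_mul_Ioi n hc]; positivity)

local notation "μ₊" => volume.restrict (Ioi (0 : ℝ))

section QuadrantMoments

variable {α c : ℝ} (i j : ℕ)

lemma monomial_mul_exp_neg_eq :
    (fun z : ℝ × ℝ => z.1 ^ i * z.2 ^ j * exp (-(α * z.1 + c * z.2))) =
      fun z => (z.1 ^ i * exp (-(α * z.1))) * (z.2 ^ j * exp (-(c * z.2))) := by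
  ext z
  rw [neg_add, exp_add]
  ring

lemma integrable_monomial_mul_exp_neg (hα : 0 < α) (hc : 0 < c) :
    Integrable (fun z : ℝ × ℝ => z.1 ^ i * z.2 ^ j * exp (-(α * z.1 + c * z.2))) (μ₊.prod μ₊) := by
  rw [monomial_mul_exp_neg_eq]
  exact (integrableOn_pow_mul_exp_neg_mul_Ioi i hα).mul_prod
    (integrableOn_pow_mul_exp_neg_mul_Ioi j hc)

lemma integral_monomial_mul_exp_neg (hα : 0 < α) (hc : 0 < c) :
    ∫ z, z.1 ^ i * z.2 ^ j * exp (-(α * z.1 + c * z.2)) ∂(μ₊.prod μ₊) =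
      i ! / α ^ (i + 1) * (j ! / c ^ (j + 1)) := by
  rw [monomial_mul_exp_neg_eq, integral_prod_mul (fun s => s ^ i * exp (-(α * s)))
    (fun t => t ^ j * exp (-(c * t))), integral_pow_mul_exp_neg_mul_Ioi i hα,
    integral_pow_mul_exp_neg_mul_Ioi j hc]

end QuadrantMoments

lemma quadForm_nonneg {ρ : ℝ} (hρ : ρ ^ 2 ≤ 1) (s t : ℝ) : 0 ≤ s ^ 2 - 2 * ρ * s * t + t ^ 2 := by
  nlinarith [sq_nonneg (s - ρ * t), sq_nonneg t]

noncomputable def quadrantKernel (α c β ρ : ℝ) (z : ℝ × ℝ) : ℝ :=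
  exp (-(α * z.1 + c * z.2) - β * (z.1 ^ 2 - 2 * ρ * z.1 * z.2 + z.2 ^ 2))

section QuadrantKernel

variable {α c β ρ : ℝ}

lemma quadrantKernel_eq (z : ℝ × ℝ) : quadrantKernel α c β ρ z =
    exp (-(α * z.1 + c * z.2)) * exp (-(β * (z.1 ^ 2 - 2 * ρ * z.1 * z.2 + z.2 ^ 2))) := by
  rw [quadrantKernel, ← exp_add, sub_eq_add_neg]

lemma quadrantKernel_le (hβ : 0 ≤ β) (hρ : ρ ^ 2 ≤ 1) (z : ℝ × ℝ) :
    quadrantKernel α c β ρ z ≤ exp (-(α * z.1 + c * z.2)) := by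
  rw [quadrantKernel_eq]
  refine mul_le_of_le_one_right (exp_nonneg _) (exp_le_one_iff.2 ?_)
  have := quadForm_nonneg hρ z.1 z.2
  rw [neg_nonpos]
  positivity

lemma exp_mul_one_sub_le_quadrantKernel (z : ℝ × ℝ) :
    exp (-(α * z.1 + c * z.2)) * (1 - β * (z.1 ^ 2 - 2 * ρ * z.1 * z.2 + z.2 ^ 2)) ≤
      quadrantKernel α c β ρ z := by
  rw [quadrantKernel_eq, sub_eq_neg_add]
  exact mul_le_mul_of_nonneg_left (add_one_le_exp _) (exp_nonneg _)

variable (hα : 0 < α) (hc : 0 < c)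
include hα hc

lemma integrable_exp_neg_linear :
    Integrable (fun z : ℝ × ℝ => exp (-(α * z.1 + c * z.2))) (μ₊.prod μ₊) := by
  simpa using integrable_monomial_mul_exp_neg 0 0 hα hc

lemma integrable_quadrantKernel (hβ : 0 ≤ β) (hρ : ρ ^ 2 ≤ 1) :
    Integrable (quadrantKernel α c β ρ) (μ₊.prod μ₊) := by
  refine (integrable_exp_neg_linear hα hc).mono' (by unfold quadrantKernel; fun_prop)
    (.of_forall fun z => ?_)
  exact (Real.norm_of_nonneg (exp_nonneg _)).trans_le (quadrantKernel_le hβ hρ z)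

lemma integral_quadrantKernel_le (hβ : 0 ≤ β) (hρ : ρ ^ 2 ≤ 1) :
    ∫ z, quadrantKernel α c β ρ z ∂(μ₊.prod μ₊) ≤ 1 / (α * c) := by
  calc ∫ z, quadrantKernel α c β ρ z ∂(μ₊.prod μ₊)
      ≤ ∫ z, exp (-(α * z.1 + c * z.2)) ∂(μ₊.prod μ₊) :=
        integral_mono (integrable_quadrantKernel hα hc hβ hρ) (integrable_exp_neg_linear hα hc)
          (quadrantKernel_le hβ hρ)
    _ = 1 / (α * c) := by
        simpa [one_div, mul_comm] using integral_monomial_mul_exp_neg 0 0 hα hc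

lemma le_integral_quadrantKernel (hβ : 0 ≤ β) (hρ : ρ ^ 2 ≤ 1) :
    1 / (α * c) - 2 * β * (1 / (α ^ 3 * c) - ρ / (α ^ 2 * c ^ 2) + 1 / (α * c ^ 3)) ≤
      ∫ z, quadrantKernel α c β ρ z ∂(μ₊.prod μ₊) := by
  set m : ℕ → ℕ → ℝ × ℝ → ℝ := fun i j z => z.1 ^ i * z.2 ^ j * exp (-(α * z.1 + c * z.2))
  have hm (i j : ℕ) : Integrable (m i j) (μ₊.prod μ₊) := integrable_monomial_mul_exp_neg i j hα hc
  have hm_int (i j : ℕ) := integral_monomial_mul_exp_neg i j hα hc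
  have expand : (fun z : ℝ × ℝ => exp (-(α * z.1 + c * z.2)) *
      (1 - β * (z.1 ^ 2 - 2 * ρ * z.1 * z.2 + z.2 ^ 2))) =
      fun z => m 0 0 z - β * m 2 0 z + 2 * β * ρ * m 1 1 z - β * m 0 2 z := by
    ext z; simp only [m]; ring
  calc 1 / (α * c) - 2 * β * (1 / (α ^ 3 * c) - ρ / (α ^ 2 * c ^ 2) + 1 / (α * c ^ 3))
      = ∫ z, exp (-(α * z.1 + c * z.2)) *
          (1 - β * (z.1 ^ 2 - 2 * ρ * z.1 * z.2 + z.2 ^ 2)) ∂(μ₊.prod μ₊) := by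
        rw [expand, integral_sub, integral_add, integral_sub, integral_const_mul,
          integral_const_mul, integral_const_mul, hm_int, hm_int, hm_int, hm_int]
        · field_simp
          ring
        all_goals fun_prop
    _ ≤ ∫ z, quadrantKernel α c β ρ z ∂(μ₊.prod μ₊) :=
        integral_mono (by rw [expand]; fun_prop) (integrable_quadrantKernel hα hc hβ hρ)
          exp_mul_one_sub_le_quadrantKernel

end QuadrantKernel

lemma biNormalPdf_add (ρ x y s t : ℝ) :
    biNormalPdf ρ (x + s) (y + t) = biNormalPdf ρ x y *
      quadrantKernel ((x - ρ * y) / (1 - ρ ^ 2)) ((y - ρ * x) / (1 - ρ ^ 2))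
        (2 * (1 - ρ ^ 2))⁻¹ ρ (s, t) := by
  rw [biNormalPdf, biNormalPdf, quadrantKernel, mul_assoc _ (exp _), ← exp_add]
  congr 2
  simp only [div_eq_mul_inv, mul_inv]
  ring

lemma biNormalPdf_nonneg (ρ x y : ℝ) : 0 ≤ biNormalPdf ρ x y := by
  unfold biNormalPdf
  positivity

lemma biNormalTail_eq_mul_integral_quadrantKernel {ρ x y : ℝ} (hρ : ρ ^ 2 < 1)
    (hx : 0 < x - ρ * y) (hy : 0 < y - ρ * x) :
    biNormalTail ρ x y = biNormalPdf ρ x y *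
      ∫ z, quadrantKernel ((x - ρ * y) / (1 - ρ ^ 2)) ((y - ρ * x) / (1 - ρ ^ 2))
        (2 * (1 - ρ ^ 2))⁻¹ ρ z ∂(μ₊.prod μ₊) := by
  have hσ : 0 < 1 - ρ ^ 2 := sub_pos.2 hρ
  rw [integral_prod _ (integrable_quadrantKernel (div_pos hx hσ) (div_pos hy hσ)
    (by positivity) hρ.le), ← integral_const_mul, biNormalTail,
    integral_Ioi_eq_integral_Ioi_zero_add _ x]
  congr 1
  ext s
  rw [integral_Ioi_eq_integral_Ioi_zero_add _ y, ← integral_const_mul]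
  simp only [biNormalPdf_add]

/-- Savage-type bounds for the joint upper tail of the bivariate normal
(one- and two-term truncations of Ruben's expansion of the bivariate Mills ratio). -/
theorem stmt_18 (ρ : ℝ) (hρ : ρ ∈ Set.Ioo (-1 : ℝ) 1) (x y : ℝ)
    (hx : 0 < x - ρ * y) (hy : 0 < y - ρ * x) :
    biNormalTail ρ x y
        ≤ biNormalPdf ρ x y * (1 - ρ ^ 2) ^ 2 / ((x - ρ * y) * (y - ρ * x))
    ∧ biNormalPdf ρ x y * (1 - ρ ^ 2) ^ 2 / ((x - ρ * y) * (y - ρ * x)) *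
          (1 - (1 - ρ ^ 2) * (1 / (x - ρ * y) ^ 2
            - ρ / ((x - ρ * y) * (y - ρ * x)) + 1 / (y - ρ * x) ^ 2))
        ≤ biNormalTail ρ x y := by
  have hρ2 : ρ ^ 2 < 1 := by rw [sq_lt_one_iff_abs_lt_one, abs_lt]; exact hρ
  have hσ : 0 < 1 - ρ ^ 2 := sub_pos.2 hρ2
  have hα := div_pos hx hσ
  have hc := div_pos hy hσ
  have hβ : 0 ≤ (2 * (1 - ρ ^ 2))⁻¹ := by positivity
  have hpdf := biNormalPdf_nonneg ρ x y
  rw [biNormalTail_eq_mul_integral_quadrantKernel hρ2 hx hy, mul_div_assoc]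
  set a := x - ρ * y
  set b := y - ρ * x
  set σ := 1 - ρ ^ 2
  constructor
  · refine mul_le_mul_of_nonneg_left ((integral_quadrantKernel_le hα hc hβ hρ2.le).trans_eq ?_) hpdf
    field_simp
  · rw [mul_assoc]
    refine mul_le_mul_of_nonneg_left
      ((le_integral_quadrantKernel hα hc hβ hρ2.le).trans_eq' ?_) hpdf
    field_simp
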